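/- (Sanity of Phase.) In the PAM of any language l: (1) if ⟨c | K⟩^{↕_c} ↪_l ⟨c' | K'⟩^{↕_{c'}} and K' contains strictly more stack frames than K, then ↕_c = ↕_{c'} = ↓ and K' = K ∘ f for some frame f; (2) if ⟨c | K⟩^{↕_c} ↪_l ⟨c' | K'⟩^{↕_{c'}} and K' contains strictly fewer stack frames than K, then ↕_{c'} = ↑ and K = K' ∘ f for some frame f; (3) if the PAM rules of l have no up-down rules and ⟨c | K⟩^↑ ↪_l ⟨c' | K'⟩^{↕_{c'}} without using the reset rule, then ↕_{c'} = ↑ and K = K' ∘ f for some frame f. -/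
import Mathlib


namespace SosPam

/-- Match types for pattern variables. -/
inductive MatchType : Type where
  | Val : MatchType
  | NonVal : MatchType
  | All : MatchType
deriving DecidableEq

/-- Phases of the Phased Abstract Machine. -/
inductive Phase : Type where
  | down : Phase
  | up : Phase
deriving DecidableEq

/-- Terms: nonvalue nodes, value nodes, constants, and pattern variables
annotated with a match type.  `S` is the type of symbols, `C` of constants,
`V` of variables. -/
inductive Tm (S C V : Type) : Type where
  | nonval : S → List (Tm S C V) → Tm S C V
  | val : S → List (Tm S C V) → Tm S C V
  | const : C → Tm S C V
  | pvar : V → MatchType → Tm S C V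

namespace Tm

variable {S C V : Type}

/-- Terms classified as values by their root node. -/
def isValRoot : Tm S C V → Prop
  | .val _ _ => True
  | .const _ => True
  | _ => False

/-- Terms classified as nonvalues by their root node. -/
def isNonvalRoot : Tm S C V → Prop
  | .nonval _ _ => True
  | _ => False

/-- Whether a term may be the image of a variable with the given match type:
value variables match only value-rooted terms (and value variables),
nonvalue variables only nonvalue-rooted terms (and nonvalue variables),
general variables match anything. -/
def mtOK : MatchType → Tm S C V → Prop
  | .All, _ => True
  | .Val, .val _ _ => True
  | .Val, .const _ => True
  | .Val, .pvar _ .Val => True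
  | .Val, _ => False
  | .NonVal, .nonval _ _ => True
  | .NonVal, .pvar _ .NonVal => True
  | .NonVal, _ => False

/-- Applying a (total) substitution to a term. -/
def subst (σ : V → Tm S C V) : Tm S C V → Tm S C V
  | .nonval s ts => .nonval s (ts.attach.map fun x => subst σ x.1)
  | .val s ts => .val s (ts.attach.map fun x => subst σ x.1)
  | .const c => .const c
  | .pvar v _ => σ v
  decreasing_by
    all_goals
      simp_wf
      have := List.sizeOf_lt_of_mem x.2
      omega

/-- Ground (variable-free) terms; these are the concrete terms. -/
inductive Ground : Tm S C V → Prop where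
  | nonval {s : S} {ts : List (Tm S C V)} : (∀ t ∈ ts, Ground t) → Ground (.nonval s ts)
  | val {s : S} {ts : List (Tm S C V)} : (∀ t ∈ ts, Ground t) → Ground (.val s ts)
  | const {c : C} : Ground (.const c)

/-- `OccMT p v mt` means the variable `v` occurs in `p` with match type `mt`. -/
inductive OccMT : Tm S C V → V → MatchType → Prop where
  | pvar {v mt} : OccMT (.pvar v mt) v mt
  | nonval {s ts t v mt} : t ∈ ts → OccMT t v mt → OccMT (.nonval s ts) v mt
  | val {s ts t v mt} : t ∈ ts → OccMT t v mt → OccMT (.val s ts) v mt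

end Tm

/-- A substitution respects the match types of all variable occurrences
described by `occ`. -/
def MTOk {S C V : Type} (σ : V → Tm S C V) (occ : V → MatchType → Prop) : Prop :=
  ∀ v mt, occ v mt → Tm.mtOK mt (σ v)

/-- A configuration: a term together with a reduction state (itself represented
as a term, e.g. an environment). -/
structure Conf (S C V : Type) : Type where
  tm : Tm S C V
  st : Tm S C V

namespace Conf

variable {S C V : Type}

def subst (σ : V → Tm S C V) (c : Conf S C V) : Conf S C V :=
  ⟨c.tm.subst σ, c.st.subst σ⟩

def Ground (c : Conf S C V) : Prop := c.tm.Ground ∧ c.st.Ground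

def OccMT (c : Conf S C V) (v : V) (mt : MatchType) : Prop :=
  c.tm.OccMT v mt ∨ c.st.OccMT v mt

/-- A configuration is a value if its term is a value. -/
def IsValue (c : Conf S C V) : Prop := c.tm.isValRoot

/-- `σ` matches pattern `p` against configuration `c` (respecting match types). -/
def Matches (σ : V → Tm S C V) (p c : Conf S C V) : Prop :=
  subst σ p = c ∧ MTOk σ p.OccMT

end Conf

/-- Right-hand sides of straightened SOS rules: build a configuration,
a step premise `let c2 = step(c1) in rhs`, or a semantic-function premise
`let c = f(args) in rhs`.  `F` indexes the semantic functions. -/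
inductive Rhs (S C V F : Type) : Type where
  | build : Conf S C V → Rhs S C V F
  | letStep : Conf S C V → Conf S C V → Rhs S C V F → Rhs S C V F
  | letSem : Conf S C V → F → List (Conf S C V) → Rhs S C V F → Rhs S C V F

namespace Rhs

variable {S C V F : Type}

def subst (σ : V → Tm S C V) : Rhs S C V F → Rhs S C V F
  | .build c => .build (c.subst σ)
  | .letStep c1 c2 r => .letStep (c1.subst σ) (c2.subst σ) (r.subst σ)
  | .letSem c f args r => .letSem (c.subst σ) f (args.map (Conf.subst σ)) (r.subst σ)

def OccMT : Rhs S C V F → V → MatchType → Prop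
  | .build c => c.OccMT
  | .letStep c1 c2 r => fun v mt => c1.OccMT v mt ∨ c2.OccMT v mt ∨ r.OccMT v mt
  | .letSem c _ args r => fun v mt =>
      c.OccMT v mt ∨ (∃ a ∈ args, Conf.OccMT a v mt) ∨ r.OccMT v mt

end Rhs

/-- A language: a set of straightened SOS rules together with its semantic
functions.  Semantic functions are relations between lists of configurations
and configurations such that all inputs and the output are ground values, and
each input list has only finitely many possible outputs. -/
structure Lang (S C V F : Type) : Type 1 where
  rules : Set (Conf S C V × Rhs S C V F)
  sem : F → List (Conf S C V) → Conf S C V → Prop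
  sem_values : ∀ f args r, sem f args r →
    ((∀ c ∈ args, Conf.Ground c ∧ Conf.IsValue c) ∧ Conf.Ground r ∧ Conf.IsValue r)
  sem_finite : ∀ f args, Set.Finite {r | sem f args r}

mutual
  /-- One step of the straightened structural operational semantics,
  `c ⤳_l d`. -/
  inductive SosStep {S C V F : Type} (L : Lang S C V F) : Conf S C V → Conf S C V → Prop where
    | mk {lhs rhs σ c d} : (lhs, rhs) ∈ L.rules → Conf.Matches σ lhs c → Conf.Ground c →
        ExecRhs L σ rhs d → SosStep L c d

  /-- Executing the right-hand side of an SOS rule under a substitution. -/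
  inductive ExecRhs {S C V F : Type} (L : Lang S C V F) :
      (V → Tm S C V) → Rhs S C V F → Conf S C V → Prop where
    | build {σ c} : ExecRhs L σ (.build c) (Conf.subst σ c)
    | letStep {σ c1 c2 r d2 d} : SosStep L (Conf.subst σ c1) d2 → Conf.subst σ c2 = d2 →
        MTOk σ c2.OccMT → ExecRhs L σ r d → ExecRhs L σ (.letStep c1 c2 r) d
    | letSem {σ cret f args r rr d} : L.sem f (args.map (Conf.subst σ)) rr →
        Conf.subst σ cret = rr → MTOk σ cret.OccMT → ExecRhs L σ r d →
        ExecRhs L σ (.letSem cret f args r) d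
end

/-- A frame `[c → rhs]` of a PAM context. -/
structure Frame (S C V F : Type) : Type where
  pat : Conf S C V
  rhs : Rhs S C V F

def Frame.subst {S C V F : Type} (σ : V → Tm S C V) (f : Frame S C V F) : Frame S C V F :=
  ⟨f.pat.subst σ, f.rhs.subst σ⟩

def Frame.OccMT {S C V F : Type} (f : Frame S C V F) (v : V) (mt : MatchType) : Prop :=
  f.pat.OccMT v mt ∨ f.rhs.OccMT v mt

/-- Contexts: stacks of frames ending in `emp` or the context variable `k`. -/
inductive Ctx (S C V F : Type) : Type where
  | emp : Ctx S C V F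
  | kvar : Ctx S C V F
  | push : Ctx S C V F → Frame S C V F → Ctx S C V F

/-- A substitution for PAM patterns: an assignment to term variables together
with an assignment to the context variable. -/
structure PSubst (S C V F : Type) : Type where
  tm : V → Tm S C V
  kv : Ctx S C V F

def Ctx.subst {S C V F : Type} (θ : PSubst S C V F) : Ctx S C V F → Ctx S C V F
  | .emp => .emp
  | .kvar => θ.kv
  | .push K f => .push (K.subst θ) (f.subst θ.tm)

def Ctx.OccMT {S C V F : Type} : Ctx S C V F → V → MatchType → Prop
  | .emp => fun _ _ => False
  | .kvar => fun _ _ => False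
  | .push K f => fun v mt => K.OccMT v mt ∨ f.OccMT v mt

/-- Number of stack frames of a context. -/
def Ctx.len {S C V F : Type} : Ctx S C V F → ℕ
  | .emp => 0
  | .kvar => 0
  | .push K _ => K.len + 1

/-- A state of the Phased Abstract Machine `⟨c | K⟩^↕`. -/
structure PState (S C V F : Type) : Type where
  conf : Conf S C V
  ctx : Ctx S C V F
  phase : Phase

/-- Right-hand sides of PAM rules: a sequence of semantic-function premises
terminating in a PAM state. -/
inductive PamRhs (S C V F : Type) : Type where
  | ret : Conf S C V → Ctx S C V F → Phase → PamRhs S C V F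
  | letSem : Conf S C V → F → List (Conf S C V) → PamRhs S C V F → PamRhs S C V F

def PamRhs.finalPhase {S C V F : Type} : PamRhs S C V F → Phase
  | .ret _ _ ph => ph
  | .letSem _ _ _ r => r.finalPhase

/-- A PAM rule. -/
structure PamRule (S C V F : Type) : Type where
  lhs : PState S C V F
  rhs : PamRhs S C V F

/-- An up-rule: steps an up-state to an up-state. -/
def PamRule.IsUp {S C V F : Type} (r : PamRule S C V F) : Prop :=
  r.lhs.phase = .up ∧ r.rhs.finalPhase = .up

/-- An up-down rule: steps an up-state to a down-state. -/
def PamRule.IsUpDown {S C V F : Type} (r : PamRule S C V F) : Prop :=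
  r.lhs.phase = .up ∧ r.rhs.finalPhase = .down

/-- Executing the right-hand side of a PAM rule under a substitution. -/
inductive ExecPamRhs {S C V F : Type} (L : Lang S C V F) (θ : PSubst S C V F) :
    PamRhs S C V F → PState S C V F → Prop where
  | ret {c K ph} : ExecPamRhs L θ (.ret c K ph) ⟨Conf.subst θ.tm c, Ctx.subst θ K, ph⟩
  | letSem {cret f args r rr s} : L.sem f (args.map (Conf.subst θ.tm)) rr →
      Conf.subst θ.tm cret = rr → MTOk θ.tm cret.OccMT → ExecPamRhs L θ r s →
      ExecPamRhs L θ (.letSem cret f args r) s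

/-- One step of PAM execution using a particular rule. -/
def PamStepBy {S C V F : Type} (L : Lang S C V F) (r : PamRule S C V F)
    (s s' : PState S C V F) : Prop :=
  ∃ θ : PSubst S C V F,
    Conf.subst θ.tm r.lhs.conf = s.conf ∧
    Ctx.subst θ r.lhs.ctx = s.ctx ∧
    r.lhs.phase = s.phase ∧
    MTOk θ.tm r.lhs.conf.OccMT ∧ MTOk θ.tm r.lhs.ctx.OccMT ∧
    ExecPamRhs L θ r.rhs s'

/-- One step of PAM execution, `s ↪_l s'`, with rules drawn from `R`. -/
def PamStep {S C V F : Type} (L : Lang S C V F) (R : Set (PamRule S C V F))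
    (s s' : PState S C V F) : Prop :=
  ∃ r ∈ R, PamStepBy L r s s'

/-- A PAM derivation along a given sequence of rules. -/
inductive PamSteps {S C V F : Type} (L : Lang S C V F) (R : Set (PamRule S C V F)) :
    List (PamRule S C V F) → PState S C V F → PState S C V F → Prop where
  | nil {s} : PamSteps L R [] s s
  | cons {r rs s s' s''} : r ∈ R → PamStepBy L r s s' → PamSteps L R rs s' s'' →
      PamSteps L R (r :: rs) s s''

/-- The `sosRhsToPam` function of the SOS-to-PAM algorithm (Fig. 9). -/
def sosRhsToPam {S C V F : Type} :
    PState S C V F → Ctx S C V F → Rhs S C V F → Set (PamRule S C V F)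
  | s, k, .build c => {⟨s, .ret c k .up⟩}
  | s, k, .letStep c1 c2 r =>
      insert ⟨s, .ret c1 (.push k ⟨c2, r⟩) .down⟩
        (sosRhsToPam ⟨c2, .push k ⟨c2, r⟩, .up⟩ k r)
  | s, k, .letSem cret f args r =>
      insert ⟨s, .letSem cret f args (.ret cret (.push k ⟨cret, r⟩) .down)⟩
        (sosRhsToPam ⟨cret, .push k ⟨cret, r⟩, .down⟩ k r)

/-- PAM rules generated from a single SOS rule. -/
def sosRuleToPam {S C V F : Type} (p : Conf S C V × Rhs S C V F) : Set (PamRule S C V F) :=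
  sosRhsToPam ⟨p.1, .kvar, .down⟩ .kvar p.2

/-- The reset rule `⟨(t,μ) | emp⟩^↑ ↪ ⟨(t,μ) | emp⟩^↓` for a nonvalue
variable `t` and a fresh variable `μ`. -/
def resetRule {S C V F : Type} (vt vs : V) : PamRule S C V F :=
  ⟨⟨⟨.pvar vt .NonVal, .pvar vs .All⟩, .emp, .up⟩,
   .ret ⟨.pvar vt .NonVal, .pvar vs .All⟩ .emp .down⟩

/-- The `sosToPam` algorithm: the PAM rules of a language are those generated
from each SOS rule, plus the reset rule. -/
def sosToPam {S C V F : Type} (L : Lang S C V F) (vt vs : V) : Set (PamRule S C V F) :=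
  (⋃ p ∈ L.rules, sosRuleToPam p) ∪ {resetRule vt vs}

/-- Sanity of Values: rule left-hand sides never match values, and every
ground nonvalue can step (for some reduction state). -/
def SanityOfValues {S C V F : Type} (L : Lang S C V F) : Prop :=
  (∀ p ∈ L.rules, ∀ (σ : V → Tm S C V) (c : Conf S C V),
      Conf.Matches σ p.1 c → Conf.Ground c → ¬ c.IsValue) ∧
  (∀ t : Tm S C V, t.Ground → t.isNonvalRoot →
      ∃ (μ : Tm S C V) (d : Conf S C V), Conf.Ground ⟨t, μ⟩ ∧ SosStep L ⟨t, μ⟩ d)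

/-- Determinism: each configuration steps to at most one configuration. -/
def Deterministic {S C V F : Type} (L : Lang S C V F) : Prop :=
  ∀ c d d' : Conf S C V, SosStep L c d → SosStep L c d' → d = d'

/-- A pair `(c, K)` is non-stuck if `⟨c | K⟩^↑ ↪* ⟨c' | emp⟩^↑` for some `c'`. -/
def NonStuck {S C V F : Type} (L : Lang S C V F) (R : Set (PamRule S C V F))
    (c : Conf S C V) (K : Ctx S C V F) : Prop :=
  ∃ c' : Conf S C V,
    Relation.ReflTransGen (PamStep L R) ⟨c, K, .up⟩ ⟨c', .emp, .up⟩

/-- An up-rule is invertible if, whenever its left-hand side is instantiated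
to a nonvalue configuration, the PAM can step from the (down-phased)
instantiated right-hand side back to the (down-phased) instantiated
left-hand side. -/
def Invertible {S C V F : Type} (L : Lang S C V F) (R : Set (PamRule S C V F))
    (r : PamRule S C V F) : Prop :=
  ∀ (θ : PSubst S C V F) (s2 : PState S C V F),
    ¬ (Conf.subst θ.tm r.lhs.conf).IsValue →
    MTOk θ.tm r.lhs.conf.OccMT → MTOk θ.tm r.lhs.ctx.OccMT →
    ExecPamRhs L θ r.rhs s2 →
    Relation.ReflTransGen (PamStep L R)
      ⟨s2.conf, s2.ctx, .down⟩
      ⟨Conf.subst θ.tm r.lhs.conf, Ctx.subst θ r.lhs.ctx, .down⟩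

/-- `IsResetStepAt L vt vs D i`: the `i`-th step of the derivation `D` is an
application of the reset rule. -/
def IsResetStepAt {S C V F : Type} (L : Lang S C V F) (vt vs : V)
    (D : List (PState S C V F)) (i : ℕ) : Prop :=
  ∃ a b, D[i]? = some a ∧ D[i+1]? = some b ∧ PamStepBy L (resetRule vt vs) a b

/-- An inversion sequence beginning at `⟨c | K⟩^↑`: a derivation
`⟨c | K⟩^↑ ↪* ⟨c | K⟩^↓` containing at most one application of the reset
rule. -/
def InversionSeq {S C V F : Type} (L : Lang S C V F) (R : Set (PamRule S C V F))
    (vt vs : V) (c : Conf S C V) (K : Ctx S C V F) (l : List (PState S C V F)) : Prop :=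
  l.Chain' (PamStep L R) ∧
  l.head? = some ⟨c, K, .up⟩ ∧
  l.getLast? = some ⟨c, K, .down⟩ ∧
  ∀ i j, i < j → IsResetStepAt L vt vs l i → IsResetStepAt L vt vs l j → False

/-- A contiguous segment of `D` starting at index `j` of length `len` is an
inversion sequence. -/
def SegIsInvSeq {S C V F : Type} (L : Lang S C V F) (R : Set (PamRule S C V F))
    (vt vs : V) (D : List (PState S C V F)) (j len : ℕ) : Prop :=
  ∃ (c : Conf S C V) (K : Ctx S C V F),
    InversionSeq L R vt vs c K ((D.drop j).take len)

/-- The step of `D` starting at index `i` is a working step: the derivation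
cannot be extended so that its source state becomes part of an inversion
sequence. -/
def WorkingStepAt {S C V F : Type} (L : Lang S C V F) (R : Set (PamRule S C V F))
    (vt vs : V) (D : List (PState S C V F)) (i : ℕ) : Prop :=
  ¬ ∃ (D' : List (PState S C V F)) (j len : ℕ),
      D <+: D' ∧ D'.Chain' (PamStep L R) ∧
      j ≤ i ∧ i < j + len ∧ SegIsInvSeq L R vt vs D' j len

/-! ### Abstract machines -/

/-- A state of an abstract machine `⟨c | K⟩`. -/
structure AState (S C V F : Type) : Type where
  conf : Conf S C V
  ctx : Ctx S C V F

/-- Right-hand sides of abstract machine rules. -/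
inductive AmRhs (S C V F : Type) : Type where
  | ret : Conf S C V → Ctx S C V F → AmRhs S C V F
  | letSem : Conf S C V → F → List (Conf S C V) → AmRhs S C V F → AmRhs S C V F

/-- An abstract machine rule. -/
structure AmRule (S C V F : Type) : Type where
  lhs : AState S C V F
  rhs : AmRhs S C V F

/-- Dropping the phase from a PAM right-hand side. -/
def PamRhs.dropPhase {S C V F : Type} : PamRhs S C V F → AmRhs S C V F
  | .ret c K _ => .ret c K
  | .letSem c f args r => .letSem c f args r.dropPhase

/-- The result of unifying a pattern with a fresh value variable
(specializing it to values); `none` when unification fails. -/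
def valSpecialize {S C V : Type} : Tm S C V → Option (Tm S C V)
  | .nonval _ _ => none
  | .val s ts => some (.val s ts)
  | .const c => some (.const c)
  | .pvar v .Val => some (.pvar v .Val)
  | .pvar v .All => some (.pvar v .Val)
  | .pvar _ .NonVal => none

/-- The unfused abstract machine obtained from a set of PAM rules: remove the
reset rule, specialize the LHS term of each up-rule to a value (dropping the
rule when this fails), remove rules that would become self-loops, and drop
all phases. -/
def unfuse {S C V F : Type} (vt vs : V) (R : Set (PamRule S C V F)) :
    Set (AmRule S C V F) :=
  { a | ∃ r ∈ R, r ≠ resetRule vt vs ∧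
      ¬ (r.lhs.phase = .down ∧ r.rhs = .ret r.lhs.conf r.lhs.ctx .up) ∧
      ((r.lhs.phase = .up ∧ ∃ t', valSpecialize r.lhs.conf.tm = some t' ∧
          a = ⟨⟨⟨t', r.lhs.conf.st⟩, r.lhs.ctx⟩, r.rhs.dropPhase⟩) ∨
       (r.lhs.phase = .down ∧ a = ⟨⟨r.lhs.conf, r.lhs.ctx⟩, r.rhs.dropPhase⟩)) }

/-- Executing the right-hand side of an abstract machine rule. -/
inductive ExecAmRhs {S C V F : Type} (L : Lang S C V F) (θ : PSubst S C V F) :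
    AmRhs S C V F → AState S C V F → Prop where
  | ret {c K} : ExecAmRhs L θ (.ret c K) ⟨Conf.subst θ.tm c, Ctx.subst θ K⟩
  | letSem {cret f args r rr s} : L.sem f (args.map (Conf.subst θ.tm)) rr →
      Conf.subst θ.tm cret = rr → MTOk θ.tm cret.OccMT → ExecAmRhs L θ r s →
      ExecAmRhs L θ (.letSem cret f args r) s

/-- One step of abstract machine execution using a particular rule. -/
def AmStepBy {S C V F : Type} (L : Lang S C V F) (r : AmRule S C V F)
    (s s' : AState S C V F) : Prop :=
  ∃ θ : PSubst S C V F,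
    Conf.subst θ.tm r.lhs.conf = s.conf ∧
    Ctx.subst θ r.lhs.ctx = s.ctx ∧
    MTOk θ.tm r.lhs.conf.OccMT ∧ MTOk θ.tm r.lhs.ctx.OccMT ∧
    ExecAmRhs L θ r.rhs s'

/-- One step of abstract machine execution with rules drawn from `R`. -/
def AmStep {S C V F : Type} (L : Lang S C V F) (R : Set (AmRule S C V F))
    (s s' : AState S C V F) : Prop :=
  ∃ r ∈ R, AmStepBy L r s s'

/-- An abstract machine derivation along a given sequence of rules. -/
inductive AmSteps {S C V F : Type} (L : Lang S C V F) (R : Set (AmRule S C V F)) :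
    List (AmRule S C V F) → AState S C V F → AState S C V F → Prop where
  | nil {s} : AmSteps L R [] s s
  | cons {r rs s s' s''} : r ∈ R → AmStepBy L r s s' → AmSteps L R rs s' s'' →
      AmSteps L R (r :: rs) s s''

/-! ### Fusion -/

/-- The final state pattern of an abstract machine right-hand side. -/
def AmRhs.final {S C V F : Type} : AmRhs S C V F → AState S C V F
  | .ret c K => ⟨c, K⟩
  | .letSem _ _ _ r => r.final

/-- Replace the final state of an AM right-hand side by another right-hand
side, i.e. form `C1[C2[·]]`. -/
def AmRhs.replaceFinal {S C V F : Type} : AmRhs S C V F → AmRhs S C V F → AmRhs S C V F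
  | .ret _ _, r2 => r2
  | .letSem c f args r, r2 => .letSem c f args (r.replaceFinal r2)

/-- Applying a substitution to an AM right-hand side. -/
def AmRhs.subst {S C V F : Type} (θ : PSubst S C V F) : AmRhs S C V F → AmRhs S C V F
  | .ret c K => .ret (Conf.subst θ.tm c) (Ctx.subst θ K)
  | .letSem c f args r => .letSem (Conf.subst θ.tm c) f (args.map (Conf.subst θ.tm)) (r.subst θ)

/-- `θ` unifies two state patterns. -/
def UnifiesStates {S C V F : Type} (θ : PSubst S C V F) (a b : AState S C V F) : Prop :=
  Conf.subst θ.tm a.conf = Conf.subst θ.tm b.conf ∧ Ctx.subst θ a.ctx = Ctx.subst θ b.ctx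

/-- `θ` is more general than `θ'`: `θ'` factors through `θ`. -/
def MoreGeneral {S C V F : Type} (θ θ' : PSubst S C V F) : Prop :=
  ∃ ρ : PSubst S C V F, (∀ v, (θ.tm v).subst ρ.tm = θ'.tm v) ∧ Ctx.subst ρ θ.kv = θ'.kv

/-- `FG` is the fusion of rules `F` and `G`: obtained by unifying the final
state of `F`'s right-hand side with `G`'s left-hand side by a most general
unifier `θ`, and forming `θ(⟨lhs F⟩ → C1[C2[final G]])`. -/
def IsFusion {S C V F : Type} (Fr Gr FG : AmRule S C V F) : Prop :=
  ∃ θ : PSubst S C V F,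
    UnifiesStates θ Fr.rhs.final Gr.lhs ∧
    (∀ θ' : PSubst S C V F, UnifiesStates θ' Fr.rhs.final Gr.lhs → MoreGeneral θ θ') ∧
    FG = ⟨⟨Conf.subst θ.tm Fr.lhs.conf, Ctx.subst θ Fr.lhs.ctx⟩,
          (Fr.rhs.replaceFinal Gr.rhs).subst θ⟩

/-- A rule that invokes a semantic function. -/
def AmRhs.hasSem {S C V F : Type} : AmRhs S C V F → Prop
  | .ret _ _ => False
  | .letSem _ _ _ _ => True

/-- A term pattern that matches only values. -/
def Tm.isValPat {S C V : Type} : Tm S C V → Prop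
  | .val _ _ => True
  | .const _ => True
  | .pvar _ .Val => True
  | _ => False

/-- The rules that get fused away when building the fused abstract machine:
rules which invoke a semantic function, and (erstwhile) up-rules, i.e. rules
whose left-hand-side term matches only values. -/
def AmRule.toFuse {S C V F : Type} (r : AmRule S C V F) : Prop :=
  r.rhs.hasSem ∨ r.lhs.conf.tm.isValPat

/-- The fused abstract machine: each rule to be fused is replaced by its
fusions with all possible successor rules. -/
def fusedAM {S C V F : Type} (R : Set (AmRule S C V F)) : Set (AmRule S C V F) :=
  {r | r ∈ R ∧ ¬ r.toFuse} ∪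
  {fg | ∃ Fr ∈ R, AmRule.toFuse Fr ∧ ∃ Gr ∈ R, IsFusion Fr Gr fg}

end SosPam

namespace SosPam

variable {S C V F : Type}

/-- The context of the innermost `ret` of a PAM right-hand side. -/
def PamRhs.retCtx : PamRhs S C V F → Ctx S C V F
  | .ret _ K _ => K
  | .letSem _ _ _ r => r.retCtx

lemma exec_shape {L : Lang S C V F} {θ : PSubst S C V F} {rhs : PamRhs S C V F}
    {s : PState S C V F} (h : ExecPamRhs L θ rhs s) :
    s.ctx = Ctx.subst θ rhs.retCtx ∧ s.phase = rhs.finalPhase := by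
  induction h with
  | ret => exact ⟨rfl, rfl⟩
  | letSem _ _ _ _ ih => exact ih

def GoodLhs (s : PState S C V F) : Prop :=
  (s.ctx = .kvar ∧ s.phase = .down) ∨ ∃ f, s.ctx = Ctx.push .kvar f

def GoodRhs (r : PamRhs S C V F) : Prop :=
  (r.retCtx = .kvar ∧ r.finalPhase = .up) ∨
  ∃ f, r.retCtx = Ctx.push .kvar f ∧ r.finalPhase = .down

lemma shape_aux (rhs : Rhs S C V F) : ∀ s : PState S C V F, GoodLhs s →
    ∀ r ∈ sosRhsToPam s .kvar rhs, GoodLhs r.lhs ∧ GoodRhs r.rhs := by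
  induction rhs with
  | build c =>
      intro s hs r hr
      simp only [sosRhsToPam, Set.mem_singleton_iff] at hr
      subst hr
      exact ⟨hs, Or.inl ⟨rfl, rfl⟩⟩
  | letStep c1 c2 r' ih =>
      intro s hs r hr
      simp only [sosRhsToPam, Set.mem_insert_iff] at hr
      rcases hr with hr | hr
      · subst hr
        exact ⟨hs, Or.inr ⟨_, rfl, rfl⟩⟩
      · exact ih _ (Or.inr ⟨_, rfl⟩) r hr
  | letSem cret f args r' ih =>
      intro s hs r hr
      simp only [sosRhsToPam, Set.mem_insert_iff] at hr
      rcases hr with hr | hr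
      · subst hr
        exact ⟨hs, Or.inr ⟨_, rfl, rfl⟩⟩
      · exact ih _ (Or.inr ⟨_, rfl⟩) r hr

lemma mem_sosToPam_shape {L : Lang S C V F} {vt vs : V} {r : PamRule S C V F}
    (hr : r ∈ sosToPam L vt vs) :
    r = resetRule vt vs ∨ (GoodLhs r.lhs ∧ GoodRhs r.rhs) := by
  rcases hr with hr | hr
  · simp only [Set.mem_iUnion] at hr
    obtain ⟨p, hp, hmem⟩ := hr
    exact Or.inr (shape_aux p.2 _ (Or.inl ⟨rfl, rfl⟩) r hmem)
  · exact Or.inl hr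

lemma master {L : Lang S C V F} {vt vs : V} {r : PamRule S C V F}
    (hr : r ∈ sosToPam L vt vs) {c c' : Conf S C V} {K K' : Ctx S C V F} {p p' : Phase}
    (h : PamStepBy L r ⟨c, K, p⟩ ⟨c', K', p'⟩) :
    (r = resetRule vt vs ∧ K = K') ∨
    (p = .down ∧ p' = .up ∧ K = K') ∨
    (p = .down ∧ p' = .down ∧ ∃ f, K' = .push K f) ∨
    (p' = .up ∧ ∃ f, K = .push K' f) ∨
    (p' = .down ∧ K.len = K'.len ∧ (p = .up → r.IsUpDown)) := by
  obtain ⟨θ, hconf, hK, hp, _, _, hexec⟩ := h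
  obtain ⟨hK', hp'⟩ := exec_shape hexec
  replace hK : Ctx.subst θ r.lhs.ctx = K := hK
  replace hp : r.lhs.phase = p := hp
  replace hK' : K' = Ctx.subst θ r.rhs.retCtx := hK'
  replace hp' : p' = r.rhs.finalPhase := hp'
  rcases mem_sosToPam_shape hr with hreset | ⟨hlhs, hrhs⟩
  · subst hreset
    refine Or.inl ⟨rfl, ?_⟩
    simp only [resetRule, Ctx.subst, PamRhs.retCtx] at hK hK'
    rw [← hK, hK']
  · rcases hlhs with ⟨hc, hph⟩ | ⟨f, hc⟩ <;>
      rcases hrhs with ⟨hc', hph'⟩ | ⟨g, hc', hph'⟩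
    · refine Or.inr (Or.inl ⟨hph ▸ hp.symm ▸ rfl, hph' ▸ hp', ?_⟩)
      rw [← hK, hc, hK', hc']
    · refine Or.inr (Or.inr (Or.inl ⟨hph ▸ hp.symm ▸ rfl, hph' ▸ hp', ?_⟩))
      refine ⟨g.subst θ.tm, ?_⟩
      rw [hK', hc', ← hK, hc]
      rfl
    · refine Or.inr (Or.inr (Or.inr (Or.inl ⟨hph' ▸ hp', ⟨f.subst θ.tm, ?_⟩⟩)))
      rw [← hK, hc, hK', hc']
      rfl
    · refine Or.inr (Or.inr (Or.inr (Or.inr ⟨hph' ▸ hp', ?_, ?_⟩)))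
      · rw [← hK, hc, hK', hc']
        rfl
      · intro hpu
        exact ⟨hp.trans hpu, hph'⟩

/-- **Sanity of Phase.** In the PAM of any language:
(1) a step that strictly increases the number of stack frames goes from a
down-state to a down-state and pushes exactly one frame;
(2) a step that strictly decreases the number of stack frames ends in an
up-state and pops exactly one frame;
(3) if there are no up-down rules (other than the always-present reset rule),
a step from an up-state not using the reset rule ends in an up-state and pops
exactly one frame. -/
theorem sanity_of_phase {S C V F : Type} (L : Lang S C V F) (vt vs : V)
    (hvs : vt ≠ vs) :
    (∀ (c c' : Conf S C V) (K K' : Ctx S C V F) (p p' : Phase),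
        PamStep L (sosToPam L vt vs) ⟨c, K, p⟩ ⟨c', K', p'⟩ → K.len < K'.len →
        p = .down ∧ p' = .down ∧ ∃ f, K' = .push K f) ∧
    (∀ (c c' : Conf S C V) (K K' : Ctx S C V F) (p p' : Phase),
        PamStep L (sosToPam L vt vs) ⟨c, K, p⟩ ⟨c', K', p'⟩ → K'.len < K.len →
        p' = .up ∧ ∃ f, K = .push K' f) ∧
    ((∀ r ∈ sosToPam L vt vs, r.IsUpDown → r = resetRule vt vs) →
      ∀ (c c' : Conf S C V) (K K' : Ctx S C V F) (p' : Phase),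
        (∃ r ∈ sosToPam L vt vs, r ≠ resetRule vt vs ∧
            PamStepBy L r ⟨c, K, .up⟩ ⟨c', K', p'⟩) →
        p' = .up ∧ ∃ f, K = .push K' f) := by
  refine ⟨?_, ?_, ?_⟩
  · rintro c c' K K' p p' ⟨r, hr, hstep⟩ hlt
    rcases master hr hstep with ⟨_, hKK⟩ | ⟨hp, hp', hKK⟩ | h | ⟨_, f, hKK⟩ | ⟨_, hlen, _⟩
    · exact absurd hlt (by rw [hKK]; omega)
    · exact absurd hlt (by rw [hKK]; omega)
    · exact h
    · exact absurd hlt (by subst hKK; simp only [Ctx.len]; omega)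
    · omega
  · rintro c c' K K' p p' ⟨r, hr, hstep⟩ hlt
    rcases master hr hstep with ⟨_, hKK⟩ | ⟨hp, hp', hKK⟩ | ⟨_, _, f, hKK⟩ | h | ⟨_, hlen, _⟩
    · exact absurd hlt (by rw [hKK]; omega)
    · exact absurd hlt (by rw [hKK]; omega)
    · exact absurd hlt (by subst hKK; simp only [Ctx.len]; omega)
    · exact h
    · omega
  · rintro hud c c' K K' p' ⟨r, hr, hne, hstep⟩
    rcases master hr hstep with ⟨hre, _⟩ | ⟨hp, _, _⟩ | ⟨hp, _, _⟩ | h | ⟨_, _, hiud⟩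
    · exact absurd hre hne
    · exact absurd hp (by simp)
    · exact absurd hp (by simp)
    · exact h
    · exact absurd (hud r hr (hiud rfl)) hne

end SosPam
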